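/- The equality S = U(G,σ) fails in general for 2-BMGs: for the BMG (G,σ) explained by the triple tree x₁y|x₂ (the rooted tree on leaves x₁, x₂, y in which lca(x₁,y) is a proper descendant of the root and x₂ is a child of the root) with σ(x₁)=σ(x₂)≠σ(y), the umbrella vertex set is U(G,σ) = {x₁, x₂} while the support set is S = {x₂}; in particular S ⊊ U(G,σ) = S^(0). -/
import Mathlib


/-- A (finite) rooted tree on vertex type `V`, encoded by its ancestor relation:
`anc u v` means that `u` is an ancestor of `v`, i.e. `u` lies on the path from
the root to `v` (in particular the relation is reflexive, `v ⪯_T u ↔ anc u v`). -/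
structure RTree (V : Type) where
  anc : V → V → Prop
  refl : ∀ v, anc v v
  antisymm : ∀ u v, anc u v → anc v u → u = v
  trans : ∀ u v w, anc u v → anc v w → anc u w
  root : V
  root_anc : ∀ v, anc root v
  chain : ∀ u v w, anc u w → anc v w → anc u v ∨ anc v u

namespace RTree

variable {V C : Type}

/-- a leaf: a vertex without proper descendants. -/
def IsLeaf (T : RTree V) (v : V) : Prop := ∀ w, T.anc v w → w = v

/-- `v` is a child of `u`: `v ≺_T u` with no vertex strictly in between. -/
def IsChild (T : RTree V) (v u : V) : Prop :=
  T.anc u v ∧ u ≠ v ∧ ∀ w, T.anc u w → T.anc w v → w = u ∨ w = v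

/-- phylogenetic: every inner vertex has at least two children. -/
def Phylo (T : RTree V) : Prop :=
  ∀ u, ¬ T.IsLeaf u → ∃ v w, v ≠ w ∧ T.IsChild v u ∧ T.IsChild w u

/-- the leaf set `L(T)`. -/
def leaves (T : RTree V) : Set V := {x | T.IsLeaf x}

/-- `y` is a best match of `x` in the leaf-colored tree `(T,σ)`:
both are leaves, `σ x ≠ σ y`, and for every leaf `y'` of the color `σ y` we have
`lca(x,y) ⪯_T lca(x,y')`, i.e. every common ancestor of `x` and `y'` is an
ancestor of `y`.  These are exactly the arcs of the best match graph `G(T,σ)`,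
whose vertex set is the leaf set of `T`. -/
def BestMatch (T : RTree V) (σ : V → C) (x y : V) : Prop :=
  T.IsLeaf x ∧ T.IsLeaf y ∧ σ x ≠ σ y ∧
    ∀ y', T.IsLeaf y' → σ y' = σ y →
      ∀ u, T.anc u x → T.anc u y' → T.anc u y

/-- the subtree `T(v)` of `T` rooted at `v`. -/
def subtree (T : RTree V) (v : V) : RTree {w : V // T.anc v w} where
  anc a b := T.anc a.1 b.1
  refl a := T.refl a.1
  antisymm a b h1 h2 := Subtype.ext (T.antisymm _ _ h1 h2)
  trans a b c h1 h2 := T.trans _ _ _ h1 h2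
  root := ⟨v, T.refl v⟩
  root_anc a := a.2
  chain a b c h1 h2 := T.chain _ _ _ h1 h2

/-- contraction of the tree edge between the non-root vertex `v` and its
parent: the vertex `v` is identified with its parent, i.e. deleted. -/
def contract (T : RTree V) (v : V) (hv : v ≠ T.root) : RTree {w : V // w ≠ v} where
  anc a b := T.anc a.1 b.1
  refl a := T.refl a.1
  antisymm a b h1 h2 := Subtype.ext (T.antisymm _ _ h1 h2)
  trans a b c h1 h2 := T.trans _ _ _ h1 h2
  root := ⟨T.root, Ne.symm hv⟩
  root_anc a := T.root_anc a.1
  chain a b c h1 h2 := T.chain _ _ _ h1 h2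

/-- The edge of `T` between `v` and its parent is redundant with respect to
`G(T,σ)`: contracting it yields a tree that still explains `G(T,σ)`, i.e. the
contracted tree has the same leaf set and induces the same best-match arcs.
(Edges of a rooted tree are identified with their lower endpoint `v`.) -/
def Redundant (T : RTree V) (σ : V → C) (v : V) : Prop :=
  ∃ hv : v ≠ T.root,
    ¬ T.IsLeaf v ∧
    (∀ w : {w : V // w ≠ v}, T.IsLeaf w.1 ↔ (T.contract v hv).IsLeaf w) ∧
    (∀ x y : {w : V // w ≠ v},
      (T.BestMatch σ x.1 y.1 ↔ (T.contract v hv).BestMatch (fun w => σ w.1) x y))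

/-- `(T,σ)` is the least resolved tree (of the BMG `G(T,σ)`): a phylogenetic
tree none of whose edges is redundant. -/
def LeastResolved (T : RTree V) (σ : V → C) : Prop :=
  T.Phylo ∧ ∀ v, ¬ T.Redundant σ v

/-- the support leaves `S_u = child_T(u) ∩ L(T)` of a vertex `u`. -/
def SupportLeaves (T : RTree V) (u : V) : Set V :=
  {v | T.IsChild v u ∧ T.IsLeaf v}

/-- the set of colors `σ(L(T(v)))` occurring on leaves of the subtree `T(v)`. -/
def subColors (T : RTree V) (σ : V → C) (v : V) : Set C :=
  σ '' {x | T.IsLeaf x ∧ T.anc v x}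

/-- the set of colors `σ(L(T))` of the leaves of `T`. -/
def leafColors (T : RTree V) (σ : V → C) : Set C := σ '' T.leaves

/-- the leaf coloring uses exactly two colors, i.e. `G(T,σ)` is a 2-BMG. -/
def TwoColored (T : RTree V) (σ : V → C) : Prop :=
  ∃ c₁ c₂ : C, c₁ ≠ c₂ ∧ T.leafColors σ = {c₁, c₂}

end RTree

/-- the digraph with arc relation `A`, restricted to the vertex set `S`, is
connected: between any two vertices of `S` there is a path inside `S` in the
underlying undirected graph. -/
def ConnectedOn {β : Type} (A : β → β → Prop) (S : Set β) : Prop :=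
  S.Nonempty ∧ ∀ x ∈ S, ∀ y ∈ S,
    Relation.ReflTransGen (fun a b => a ∈ S ∧ b ∈ S ∧ (A a b ∨ A b a)) x y

/-- `K` is a connected component of the digraph induced by the arc relation `A`
on the vertex set `S`: a maximal connected subset of `S`. -/
def IsComponent {β : Type} (A : β → β → Prop) (S : Set β) (K : Set β) : Prop :=
  K ⊆ S ∧ ConnectedOn A K ∧
    ∀ K', K ⊆ K' → K' ⊆ S → ConnectedOn A K' → K' = K

namespace RTree

/-- the best match graph `G(T,σ)` (on the leaf set of `T`) is connected. -/
def BMGConnected {V C : Type} (T : RTree V) (σ : V → C) : Prop :=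
  ConnectedOn (T.BestMatch σ) T.leaves

/-- the umbrella vertices `U(G,σ)` of the BMG `G(T,σ)`: leaves having an
out-arc to every differently colored leaf. -/
def Umbrella {V C : Type} (T : RTree V) (σ : V → C) : Set V :=
  {x | T.IsLeaf x ∧ ∀ y, T.IsLeaf y → σ y ≠ σ x → T.BestMatch σ x y}

/-- `S` is closed under in-neighbours in `G(T,σ)`: `x ∈ S → N⁻(x) ⊆ S`. -/
def InClosed {V C : Type} (T : RTree V) (σ : V → C) (S : Set V) : Prop :=
  ∀ x ∈ S, ∀ y, T.BestMatch σ y x → y ∈ S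

/-- `S` is a support set of `G(T,σ)`: a maximal subset of the umbrella
vertices that is closed under in-neighbours. -/
def IsSupportSet {V C : Type} (T : RTree V) (σ : V → C) (S : Set V) : Prop :=
  S ⊆ T.Umbrella σ ∧ T.InClosed σ S ∧
    ∀ S', S ⊆ S' → S' ⊆ T.Umbrella σ → T.InClosed σ S' → S' = S

end RTree

/-- the ancestor relation of the triple tree `x₁y|x₂`: vertex `0` is the root,
`1 = x₂` (a child of the root), `2 = lca(x₁,y)`, `3 = x₁`, `4 = y`. -/
def tripleAnc : Fin 5 → Fin 5 → Prop := fun a b =>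
  a = 0 ∨ a = b ∨ (a = 2 ∧ (b = 3 ∨ b = 4))

instance : ∀ a b, Decidable (tripleAnc a b) := fun a b => by
  unfold tripleAnc; infer_instance

/-- the triple tree `x₁y|x₂`. -/
def tripleTree : RTree (Fin 5) where
  anc := tripleAnc
  refl := by decide
  antisymm := by decide
  trans := by decide
  root := 0
  root_anc := by decide
  chain := by decide

/-- the leaf coloring with `σ(x₁) = σ(x₂) = 0 ≠ 1 = σ(y)`. -/
def tripleColor : Fin 5 → Fin 2 := fun v => if v = 4 then 1 else 0

instance instAncDec : ∀ a b, Decidable (tripleTree.anc a b) :=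
  fun a b => inferInstanceAs (Decidable (tripleAnc a b))

instance instLeafDec : ∀ v, Decidable (tripleTree.IsLeaf v) :=
  fun v => inferInstanceAs (Decidable (∀ w, tripleTree.anc v w → w = v))

instance instBMDec : ∀ x y, Decidable (tripleTree.BestMatch tripleColor x y) :=
  fun x y => inferInstanceAs (Decidable (_ ∧ _ ∧ _ ∧ ∀ y', tripleTree.IsLeaf y' →
    tripleColor y' = tripleColor y → ∀ u, tripleTree.anc u x → tripleTree.anc u y' → tripleTree.anc u y))

instance instUmbDec : ∀ x, Decidable (x ∈ tripleTree.Umbrella tripleColor) :=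
  fun x => inferInstanceAs (Decidable (tripleTree.IsLeaf x ∧ ∀ y, tripleTree.IsLeaf y →
    tripleColor y ≠ tripleColor x → tripleTree.BestMatch tripleColor x y))

theorem triple_umbrella_eq : tripleTree.Umbrella tripleColor = {1, 3} := by
  ext x
  show x ∈ tripleTree.Umbrella tripleColor ↔ x = 1 ∨ x = 3
  revert x; decide

/-- For the 2-BMG explained by the triple tree `x₁y|x₂` with
`σ(x₁) = σ(x₂) ≠ σ(y)` one has `U(G,σ) = {x₁, x₂}` (here `{3, 1}`) while the
support set is `S = {x₂}` (here `{1}`); in particular `S ⊊ U(G,σ) = S⁽⁰⁾`, so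
`S = S⁽⁰⁾` fails in general for 2-BMGs. -/
theorem triple_tree_support_set_example :
    tripleTree.Umbrella tripleColor = {1, 3} ∧
    tripleTree.IsSupportSet tripleColor {1} ∧
    ({1} : Set (Fin 5)) ⊂ tripleTree.Umbrella tripleColor := by
  refine ⟨triple_umbrella_eq, ⟨?_, ?_, ?_⟩, ?_⟩
  · intro x hx
    rw [Set.mem_singleton_iff] at hx
    subst hx
    rw [triple_umbrella_eq]; left; rfl
  · intro x hx y hyx
    rw [Set.mem_singleton_iff] at hx
    subst hx
    exact absurd hyx (by revert y; decide)
  · intro S' hsub hsub2 hclosed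
    apply Set.eq_of_subset_of_subset _ hsub
    intro x hx
    rw [triple_umbrella_eq] at hsub2
    rcases hsub2 hx with h | h
    · exact h
    · exfalso
      rw [Set.mem_singleton_iff] at h
      subst h
      have h4 : (4 : Fin 5) ∈ S' := hclosed _ hx 4 (by decide)
      rcases hsub2 h4 with h | h <;> simp_all
  · rw [triple_umbrella_eq]
    constructor
    · intro x hx; rw [Set.mem_singleton_iff] at hx; subst hx; left; rfl
    · intro h
      have : (3 : Fin 5) ∈ ({1} : Set (Fin 5)) := h (by right; rfl)
      simp at this
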